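/- Assume there exists j ∈ N₀ with r^j ∉ recc(S_k^C) (i.e., N₀ ⊄ J). If M' = ∅, then cl(conv(P^B ∖ S_k^C)) = P^B. -/

import Mathlib

open Set Pointwise

noncomputable section

variable {n : ℕ} {ι : Type*} [Fintype ι]

/-- Recession cone of a set `A`. -/
def recc (A : Set (Fin n → ℝ)) : Set (Fin n → ℝ) :=
  {d | ∀ a ∈ A, ∀ t : ℝ, 0 ≤ t → a + t • d ∈ A}

/-- The translated simplicial cone `P^B = {x̄ + Σ_j x_j r^j : x_j ≥ 0}`. -/
def PBset (xb : Fin n → ℝ) (r : ι → Fin n → ℝ) : Set (Fin n → ℝ) :=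
  {x | ∃ c : ι → ℝ, (∀ j, 0 ≤ c j) ∧ x = xb + ∑ j, c j • r j}

/-- The recession cone of `P^B`, i.e. `{Σ_j t_j r^j : t_j ≥ 0}`. -/
def reccPBset (r : ι → Fin n → ℝ) : Set (Fin n → ℝ) :=
  {x | ∃ t : ι → ℝ, (∀ j, 0 ≤ t j) ∧ x = ∑ j, t j • r j}

/-- `λ⁻ = inf {λ ≥ 0 : x̄ + λ d ∈ C}` (`+∞` if the halfline misses `C`). -/
noncomputable def lamM (xb d : Fin n → ℝ) (C : Set (Fin n → ℝ)) : EReal :=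
  sInf ((fun l : ℝ => (l : EReal)) '' {l : ℝ | 0 ≤ l ∧ xb + l • d ∈ C})

/-- `λ⁺ = sup {λ ≥ 0 : x̄ + λ d ∈ C}` (`−∞` if the halfline misses `C`). -/
noncomputable def lamP (xb d : Fin n → ℝ) (C : Set (Fin n → ℝ)) : EReal :=
  sSup ((fun l : ℝ => (l : EReal)) '' {l : ℝ | 0 ≤ l ∧ xb + l • d ∈ C})

/-- `N₀`: indices whose halfline misses `C`. -/
def N0set (xb : Fin n → ℝ) (r : ι → Fin n → ℝ) (C : Set (Fin n → ℝ)) : Set ι :=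
  {j | ∀ l : ℝ, 0 ≤ l → xb + l • r j ∉ C}

/-- `N₁`: indices with `0 < λ⁻ < +∞` and `λ⁺ = +∞`. -/
def N1set (xb : Fin n → ℝ) (r : ι → Fin n → ℝ) (C : Set (Fin n → ℝ)) : Set ι :=
  {j | 0 < lamM xb (r j) C ∧ lamM xb (r j) C < ⊤ ∧ lamP xb (r j) C = ⊤}

/-- `N₂`: indices with `0 < λ⁻ < +∞` and `λ⁻ < λ⁺ < +∞`. -/
def N2set (xb : Fin n → ℝ) (r : ι → Fin n → ℝ) (C : Set (Fin n → ℝ)) : Set ι :=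
  {j | 0 < lamM xb (r j) C ∧ lamM xb (r j) C < ⊤ ∧
    lamM xb (r j) C < lamP xb (r j) C ∧ lamP xb (r j) C < ⊤}

/-- `S_k^C = {x̄} + conv(⋃_{j∈N₂} {λ r^j : 0 ≤ λ < λ⁺_j}) + {λ r^k : λ ≤ 0} + recc(C)`. -/
def SkCset (xb : Fin n → ℝ) (r : ι → Fin n → ℝ) (C : Set (Fin n → ℝ)) (k : ι) :
    Set (Fin n → ℝ) :=
  {xb} + convexHull ℝ (⋃ j ∈ N2set xb r C,
      {y : Fin n → ℝ | ∃ l : ℝ, 0 ≤ l ∧ (l : EReal) < lamP xb (r j) C ∧ y = l • r j})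
    + {y : Fin n → ℝ | ∃ l : ℝ, l ≤ 0 ∧ y = l • r k}
    + recc C

/-- `J = {i ∈ N : r^i ∈ recc(S_k^C)}`. -/
def Jset (xb : Fin n → ℝ) (r : ι → Fin n → ℝ) (C : Set (Fin n → ℝ)) (k : ι) : Set ι :=
  {i | r i ∈ recc (SkCset xb r C k)}

/-- `γ'_{ij} = sup {γ ≥ 0 : r^i + γ r^j ∈ recc(S_k^C)}` (`+∞` if unbounded). -/
noncomputable def gam' (xb : Fin n → ℝ) (r : ι → Fin n → ℝ) (C : Set (Fin n → ℝ))
    (k i j : ι) : EReal :=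
  sSup ((fun g : ℝ => (g : EReal)) ''
    {g : ℝ | 0 ≤ g ∧ r i + g • r j ∈ recc (SkCset xb r C k)})

/-- `M' = {i ∈ J : γ'_{ij} > 0 for all j ∈ N∖J}`. -/
def M'set (xb : Fin n → ℝ) (r : ι → Fin n → ℝ) (C : Set (Fin n → ℝ)) (k : ι) : Set ι :=
  {i | i ∈ Jset xb r C k ∧ ∀ j, j ∉ Jset xb r C k → 0 < gam' xb r C k i j}

/-- `ε'_j(S) = min_{i∈S} γ'_{ij}` for `S ≠ ∅`, and `+∞` for `S = ∅` (via `sInf ∅ = ⊤`). -/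
noncomputable def eps' (xb : Fin n → ℝ) (r : ι → Fin n → ℝ) (C : Set (Fin n → ℝ))
    (k : ι) (S : Finset ι) (j : ι) : EReal :=
  sInf ((fun i => gam' xb r C k i j) '' (S : Set ι))

/-!
Write `D = cl conv (P^B ∖ S_k^C)`. As `P^B` is closed and convex, `D ⊆ P^B`; for the converse it
suffices that `x̄ ∈ D` and that every `r^i` is a recession direction of `D`.

`S_k^C = x̄ + H + K`, where `K = {λ r^k : λ ≤ 0} + recc C` is a convex cone and `H` is the convex
hull of the half-open segments `[0, λ⁺_j r^j)`, so that every point of `H` can still be pushed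
outward inside `H`. Hence if `x̄ + t d ∈ S_k^C` for arbitrarily large `t`, then `d ∈ recc S_k^C`.
So for `d ∈ recc P^B ∖ recc S_k^C` a tail of the ray `x̄ + t d` lies in `P^B ∖ S_k^C`, and
`d ∈ recc D`. This covers `r^i` for `i ∉ J`; for `i ∈ J`, `M' = ∅` gives `j` with `γ'_{ij} = 0`,
so `r^i + γ r^j ∈ recc D` for all `γ > 0`, and `r^i ∈ recc D` because `recc D` is closed.

Finally, for `j ∈ N₀` with `r^j ∉ recc S_k^C`, comparing coordinates in the basis `r` shows that
`x̄ + t r^j ∈ S_k^C` with `t > 0` would force `r^j ∈ K ⊆ recc S_k^C`. So the open ray `x̄ + t r^j`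
lies in `P^B ∖ S_k^C`, and `x̄ ∈ D`.
-/

open Filter Topology

theorem add_mem_singleton_add_iff {E : Type*} [Add E] [IsLeftCancelAdd E] {x y : E} {X : Set E} :
    x + y ∈ {x} + X ↔ y ∈ X := by
  rw [singleton_add]
  exact (add_right_injective x).mem_set_image

theorem tendsto_add_smul_nhdsGT {E : Type*} [AddCommMonoid E] [Module ℝ E] [TopologicalSpace E]
    [ContinuousAdd E] [ContinuousSMul ℝ E] (x v : E) :
    Tendsto (fun t : ℝ => x + t • v) (𝓝[>] 0) (𝓝 x) :=
  tendsto_nhdsWithin_of_tendsto_nhds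
    (by simpa using ((tendsto_id (x := 𝓝 (0 : ℝ))).smul_const v).const_add x)

section Recession

variable {A B : Set (Fin n → ℝ)} {d e : Fin n → ℝ}

theorem zero_mem_recc : (0 : Fin n → ℝ) ∈ recc A := fun a ha t _ => by simpa using ha

theorem add_mem_recc (hd : d ∈ recc A) (he : e ∈ recc A) : d + e ∈ recc A := by
  intro a ha t ht
  simpa [smul_add, add_assoc] using he _ (hd a ha t ht) t ht

theorem smul_mem_recc (hd : d ∈ recc A) {s : ℝ} (hs : 0 ≤ s) : s • d ∈ recc A := by
  intro a ha t ht
  simpa [smul_smul] using hd a ha (t * s) (mul_nonneg ht hs)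

theorem recc_subset_recc_recc : recc A ⊆ recc (recc A) :=
  fun _ hd _ ha _ ht => add_mem_recc ha (smul_mem_recc hd ht)

theorem add_subset_recc_add (hA : A ⊆ recc A) (hB : B ⊆ recc B) : A + B ⊆ recc (A + B) := by
  rintro _ ⟨d, hd, e, he, rfl⟩ _ ⟨a, ha, b, hb, rfl⟩ t ht
  exact ⟨a + t • d, hA hd a ha t ht, b + t • e, hB he b hb t ht, by module⟩

theorem subset_recc_add_left (hB : B ⊆ recc B) : B ⊆ recc (A + B) := by
  rintro d hd _ ⟨a, ha, b, hb, rfl⟩ t ht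
  exact ⟨a, ha, b + t • d, hB hd b hb t ht, by rw [add_assoc]⟩

theorem recc_singleton_add (x : Fin n → ℝ) : recc ({x} + A) = recc A := by
  ext d
  simp only [recc, singleton_add, forall_mem_image, add_assoc,
    (add_right_injective x).mem_set_image]

theorem isClosed_recc (hA : IsClosed A) : IsClosed (recc A) := by
  have : recc A = ⋂ a ∈ A, ⋂ t ∈ Ici (0 : ℝ), (fun d => a + t • d) ⁻¹' A := by
    ext d; simp [recc]
  rw [this]
  exact isClosed_biInter fun a _ => isClosed_biInter fun t _ =>
    hA.preimage (by fun_prop)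

theorem mem_recc_closure_of_eventually (hA : Convex ℝ A) {x : Fin n → ℝ}
    (h : ∀ᶠ t : ℝ in atTop, x + t • d ∈ A) : d ∈ recc (closure A) := by
  obtain ⟨T, hT⟩ := eventually_atTop.mp h
  intro a ha u hu
  -- `a + u • d` is the limit of `(1 - s⁻¹) • a + s⁻¹ • (x + (s * u + max T 0) • d)`, `s → ∞`
  have hlim : Tendsto (fun s : ℝ => a + u • d + s⁻¹ • (x + max T 0 • d - a)) atTop
      (𝓝 (a + u • d)) := by
    simpa using tendsto_const_nhds.add
      ((tendsto_inv_atTop_zero (𝕜 := ℝ)).smul_const (x + max T 0 • d - a))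
  refine isClosed_closure.mem_of_tendsto hlim ?_
  filter_upwards [eventually_ge_atTop 1] with s hs
  have hs0 : 0 < s := by linarith
  have hcomb : a + u • d + s⁻¹ • (x + max T 0 • d - a)
      = (1 - s⁻¹) • a + s⁻¹ • (x + (s * u + max T 0) • d) := by
    match_scalars
    · field_simp; ring
    · field_simp
    · field_simp
  rw [hcomb]
  exact hA.closure ha (subset_closure (hT _ (by linarith [le_max_left T 0, mul_nonneg hs0.le hu])))
    (by simp [inv_le_one_of_one_le₀ hs]) (by positivity) (by ring)

theorem reccPBset_subset_recc {r : ι → Fin n → ℝ} (h : ∀ i, r i ∈ recc A) :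
    reccPBset r ⊆ recc A := by
  rintro _ ⟨t, ht, rfl⟩
  exact Finset.sum_induction _ (· ∈ recc A) (fun _ _ => add_mem_recc) zero_mem_recc
    fun i _ => smul_mem_recc (h i) (ht i)

end Recession

section Expansion

variable {E : Type*} [AddCommGroup E] [Module ℝ E] {H U : Set E}

theorem exists_one_lt_smul_mem_convexHull (h0 : (0 : E) ∈ U)
    (hU : ∀ u ∈ U, ∃ c : ℝ, 1 < c ∧ c • u ∈ U) {q : E} (hq : q ∈ convexHull ℝ U) :
    ∃ c : ℝ, 1 < c ∧ c • q ∈ convexHull ℝ U := by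
  have hshrink : ∀ {c c' : ℝ} {p : E}, 0 < c → c ≤ c' → c' • p ∈ convexHull ℝ U →
      c • p ∈ convexHull ℝ U := by
    intro c c' p hc hcc' hp
    have hc' : 0 < c' := hc.trans_le hcc'
    have := (convex_convexHull ℝ U).smul_mem_of_zero_mem (subset_convexHull ℝ U h0) hp
      ⟨div_nonneg hc.le hc'.le, div_le_one_of_le₀ hcc' hc'.le⟩
    rwa [smul_smul, div_mul_cancel₀ _ hc'.ne'] at this
  refine convexHull_min (t := {q | ∃ c : ℝ, 1 < c ∧ c • q ∈ convexHull ℝ U})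
    (fun u hu => ?_) ?_ hq
  · obtain ⟨c, hc, hcu⟩ := hU u hu
    exact ⟨c, hc, subset_convexHull ℝ U hcu⟩
  · rintro p ⟨c, hc, hcp⟩ p' ⟨c', hc', hcp'⟩ a b ha hb hab
    have hmin : 0 < min c c' := lt_min (zero_lt_one.trans hc) (zero_lt_one.trans hc')
    refine ⟨min c c', lt_min hc hc', ?_⟩
    have := convex_convexHull ℝ U (hshrink hmin (min_le_left c c') hcp)
      (hshrink hmin (min_le_right c c') hcp') ha hb hab
    rwa [smul_add, smul_comm (min c c') a, smul_comm (min c c') b]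

theorem Convex.add_smul_mem_of_one_lt_smul_mem (hH : Convex ℝ H) (h0 : (0 : E) ∈ H)
    {c δ : ℝ} {p q : E} (hc : 1 < c) (hp : c • p ∈ H) (hq : q ∈ H) (hδ : 0 ≤ δ)
    (hδc : δ ≤ 1 - c⁻¹) : p + δ • q ∈ H := by
  have hc0 : 0 < c := zero_lt_one.trans hc
  have hs : 0 < c⁻¹ + δ := by positivity
  have hw := hH hp hq (div_nonneg (inv_nonneg.mpr hc0.le) hs.le) (div_nonneg hδ hs.le)
    (by rw [← add_div, div_self hs.ne'])
  have := hH.smul_mem_of_zero_mem h0 hw ⟨hs.le, by linarith⟩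
  convert this using 1
  rw [smul_add, smul_smul, smul_smul, smul_smul, mul_div_cancel₀ _ hs.ne',
    mul_div_cancel₀ _ hs.ne', inv_mul_cancel₀ hc0.ne', one_smul]

end Expansion

theorem mem_recc_add_of_frequently {H K : Set (Fin n → ℝ)} (hH : Convex ℝ H) (hH0 : 0 ∈ H)
    (hHexp : ∀ q ∈ H, ∃ c : ℝ, 1 < c ∧ c • q ∈ H) (hK : K ⊆ recc K) {d : Fin n → ℝ}
    (hd : ∃ᶠ t : ℝ in atTop, t • d ∈ H + K) : d ∈ recc (H + K) := by
  rintro _ ⟨q₀, hq₀, k₀, hk₀, rfl⟩ u hu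
  obtain ⟨c, hc, hcq₀⟩ := hHexp q₀ hq₀
  have hc' : 0 < 1 - c⁻¹ := by linarith [inv_lt_one_of_one_lt₀ hc]
  -- a far point `t • d = q + k` of the ray, shrunk by `u / t ≤ 1 - c⁻¹`, fits into the room
  -- that `c • q₀ ∈ H` leaves around `q₀`
  obtain ⟨t, ht, q, hq, k, hk, hqk⟩ := frequently_atTop.mp hd (max 1 (u / (1 - c⁻¹)))
  have ht0 : 0 < t := zero_lt_one.trans_le (le_of_max_le_left ht)
  have hδ : u / t ≤ 1 - c⁻¹ := by
    rw [div_le_iff₀ ht0]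
    have := (div_le_iff₀ hc').mp (le_of_max_le_right ht)
    linarith
  refine ⟨q₀ + (u / t) • q, hH.add_smul_mem_of_one_lt_smul_mem hH0 hc hcq₀ hq (by positivity) hδ,
    k₀ + (u / t) • k, hK hk k₀ hk₀ _ (by positivity), ?_⟩
  calc q₀ + (u / t) • q + (k₀ + (u / t) • k) = q₀ + k₀ + (u / t) • (q + k) := by module
    _ = q₀ + k₀ + u • d := by rw [show q + k = t • d from hqk, smul_smul, div_mul_cancel₀ u ht0.ne']

section SimplicialCone

variable {r : ι → Fin n → ℝ}

theorem reccPBset_eq_image (r : ι → Fin n → ℝ) :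
    reccPBset r = Fintype.linearCombination ℝ r '' Ici 0 := by
  ext x
  simp [reccPBset, Fintype.linearCombination_apply, Pi.le_def, eq_comm]

theorem PBset_eq (xb : Fin n → ℝ) (r : ι → Fin n → ℝ) : PBset xb r = {xb} + reccPBset r := by
  ext x
  simp [PBset, reccPBset, singleton_add, neg_add_eq_iff_eq_add]

theorem convex_PBset (xb : Fin n → ℝ) (r : ι → Fin n → ℝ) : Convex ℝ (PBset xb r) := by
  rw [PBset_eq, reccPBset_eq_image]
  exact (convex_singleton xb).add ((convex_Ici 0).linear_image _)

theorem isClosed_PBset (xb : Fin n → ℝ) (hr : LinearIndependent ℝ r) :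
    IsClosed (PBset xb r) := by
  rw [PBset_eq, reccPBset_eq_image, singleton_add]
  exact (Homeomorph.addLeft xb).isClosedMap _
    ((LinearMap.isClosedEmbedding_of_injective (LinearMap.ker_eq_bot.mpr
      hr.fintypeLinearCombination_injective)).isClosedMap _ isClosed_Ici)

theorem reccPBset_subset_recc_PBset (xb : Fin n → ℝ) : reccPBset r ⊆ recc (PBset xb r) := by
  rw [PBset_eq, recc_singleton_add, reccPBset_eq_image]
  rintro _ ⟨s, hs, rfl⟩ _ ⟨a, ha, rfl⟩ t ht
  exact ⟨a + t • s, mem_Ici.mpr (add_nonneg ha (smul_nonneg ht hs)), by simp⟩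

theorem apply_mem_reccPBset (i : ι) : r i ∈ reccPBset r := by
  classical
  rw [reccPBset_eq_image]
  exact ⟨Pi.single i 1, Pi.single_nonneg.mpr zero_le_one, by simp⟩

theorem self_mem_PBset (xb : Fin n → ℝ) : xb ∈ PBset xb r :=
  ⟨0, fun _ => le_rfl, by simp⟩

end SimplicialCone

def N2segments (xb : Fin n → ℝ) (r : ι → Fin n → ℝ) (C : Set (Fin n → ℝ)) :
    Set (Fin n → ℝ) :=
  ⋃ j ∈ N2set xb r C, {y | ∃ l : ℝ, 0 ≤ l ∧ (l : EReal) < lamP xb (r j) C ∧ y = l • r j}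

def nonposRay (r : ι → Fin n → ℝ) (k : ι) : Set (Fin n → ℝ) :=
  {y | ∃ l : ℝ, l ≤ 0 ∧ y = l • r k}

section SkC

variable {xb : Fin n → ℝ} {r : ι → Fin n → ℝ} {C : Set (Fin n → ℝ)} {k : ι}

omit [Fintype ι] in
theorem SkCset_eq : SkCset xb r C k =
    {xb} + (convexHull ℝ (N2segments xb r C) + (nonposRay r k + recc C)) := by
  simp only [SkCset, N2segments, nonposRay, add_assoc]

omit [Fintype ι] in
theorem nonposRay_add_recc_subset : nonposRay r k + recc C ⊆ recc (nonposRay r k + recc C) := by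
  refine add_subset_recc_add ?_ recc_subset_recc_recc
  rintro _ ⟨l, hl, rfl⟩ _ ⟨m, hm, rfl⟩ t ht
  exact ⟨m + t * l, by nlinarith, by module⟩

omit [Fintype ι] in
theorem zero_mem_N2segments (hk : k ∈ N2set xb r C) : (0 : Fin n → ℝ) ∈ N2segments xb r C :=
  mem_biUnion hk ⟨0, le_rfl, by simpa using hk.1.trans hk.2.2.1, (zero_smul ℝ _).symm⟩

omit [Fintype ι] in
theorem exists_one_lt_smul_mem_N2segments {y : Fin n → ℝ} (hy : y ∈ N2segments xb r C) :
    ∃ c : ℝ, 1 < c ∧ c • y ∈ N2segments xb r C := by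
  obtain ⟨j, hj, l, hl, hlt, rfl⟩ := mem_iUnion₂.mp hy
  obtain ⟨l', hll', hl'⟩ := EReal.lt_iff_exists_real_btwn.mp hlt
  have hll' : l < l' := by exact_mod_cast hll'
  rcases hl.eq_or_lt with rfl | hl0
  · exact ⟨2, one_lt_two, by simpa using hy⟩
  · refine ⟨l' / l, (one_lt_div hl0).mpr hll', mem_biUnion hj ⟨l', hl0.le.trans hll'.le, hl', ?_⟩⟩
    rw [smul_smul, div_mul_cancel₀ _ hl0.ne']

omit [Fintype ι] in
theorem mem_recc_SkCset_of_frequently (hk : k ∈ N2set xb r C) {d : Fin n → ℝ}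
    (hd : ∃ᶠ t : ℝ in atTop, xb + t • d ∈ SkCset xb r C k) : d ∈ recc (SkCset xb r C k) := by
  rw [SkCset_eq, recc_singleton_add]
  simp only [SkCset_eq, add_mem_singleton_add_iff] at hd
  exact mem_recc_add_of_frequently (convex_convexHull ℝ _)
    (subset_convexHull ℝ _ (zero_mem_N2segments hk))
    (fun _ => exists_one_lt_smul_mem_convexHull (zero_mem_N2segments hk)
      fun _ => exists_one_lt_smul_mem_N2segments)
    nonposRay_add_recc_subset hd

theorem convexHull_N2segments_subset : convexHull ℝ (N2segments xb r C) ⊆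
    {x | ∃ a : ι → ℝ, (∀ j, 0 ≤ a j) ∧ (∀ j ∉ N2set xb r C, a j = 0) ∧ x = ∑ j, a j • r j} := by
  classical
  refine convexHull_min ?_ ?_
  · intro y hy
    obtain ⟨j, hj, l, hl, -, rfl⟩ := mem_iUnion₂.mp hy
    refine ⟨Pi.single j l, fun m => ?_, fun m hm => ?_, by simp [Pi.single_apply, ite_smul]⟩
    · by_cases hmj : m = j <;> simp [hmj, hl]
    · exact Pi.single_eq_of_ne (ne_of_mem_of_not_mem hj hm).symm _
  · rintro _ ⟨a, ha, has, rfl⟩ _ ⟨b, hb, hbs, rfl⟩ p q hp hq -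
    refine ⟨p • a + q • b, fun m => ?_, fun m hm => by simp [has m hm, hbs m hm], ?_⟩
    · simpa using add_nonneg (mul_nonneg hp (ha m)) (mul_nonneg hq (hb m))
    · simp [Finset.smul_sum, add_smul, smul_smul, Finset.sum_add_distrib]

theorem LinearIndependent.sum_smul_eq_of_smul_eq (hr : LinearIndependent ℝ r) {j : ι}
    (hjk : j ≠ k) {t l : ℝ} {a c : ι → ℝ} (ha : ∀ m, 0 ≤ a m) (hc : ∀ m, 0 ≤ c m) (haj : a j = 0)
    (h : t • r j = ∑ m, a m • r m + l • r k + ∑ m, c m • r m) :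
    ∑ m, c m • r m = t • r j + c k • r k := by
  classical
  have hcoef : Pi.single j t = a + Pi.single k l + c := hr.fintypeLinearCombination_injective <| by
    simpa [Fintype.linearCombination_apply, add_smul, Finset.sum_add_distrib, Pi.single_apply,
      ite_smul] using h
  have hcj : c j = t := by
    have := congr_fun hcoef j
    simp [haj, hjk] at this
    linarith
  rw [Fintype.sum_eq_add j k hjk fun m ⟨hmj, hmk⟩ => ?_, hcj]
  have := congr_fun hcoef m
  simp [hmj, hmk] at this
  simp [show c m = 0 by linarith [ha m, hc m]]

theorem add_smul_notMem_SkCset (hr : LinearIndependent ℝ r) (hrecc : recc C ⊆ reccPBset r)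
    {j : ι} (hjN2 : j ∉ N2set xb r C) (hjk : j ≠ k) (hj : r j ∉ recc (SkCset xb r C k))
    {t : ℝ} (ht : 0 < t) : xb + t • r j ∉ SkCset xb r C k := by
  rw [SkCset_eq, add_mem_singleton_add_iff]
  rintro ⟨q, hq, _, ⟨_, ⟨l, hl, rfl⟩, c, hc, rfl⟩, hsum⟩
  obtain ⟨a, ha, has, rfl⟩ := convexHull_N2segments_subset hq
  obtain ⟨s, hs, rfl⟩ := hrecc hc
  have hc_eq := hr.sum_smul_eq_of_smul_eq hjk ha hs (has j hjN2)
    (by rw [add_assoc]; exact hsum.symm)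
  -- `r j = -(s k / t) • r k + t⁻¹ • c` with `c = ∑ m, s m • r m ∈ recc C`
  apply hj
  rw [SkCset_eq, recc_singleton_add]
  refine subset_recc_add_left nonposRay_add_recc_subset ⟨(-(s k / t)) • r k,
    ⟨_, neg_nonpos.mpr (div_nonneg (hs k) ht.le), rfl⟩, t⁻¹ • ∑ m, s m • r m,
    smul_mem_recc hc (inv_nonneg.mpr ht.le), ?_⟩
  rw [hc_eq]
  match_scalars
  · field_simp; ring
  · field_simp

omit [Fintype ι] in
theorem notMem_N2set_of_mem_N0set {j : ι} (hj : j ∈ N0set xb r C) : j ∉ N2set xb r C := by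
  intro hj2
  have : {l : ℝ | 0 ≤ l ∧ xb + l • r j ∈ C} = ∅ :=
    eq_empty_of_forall_notMem fun l hl => hj l hl.1 hl.2
  exact hj2.2.1.ne (by rw [lamM, this, image_empty, sInf_empty])

end SkC

section Closure

variable {xb : Fin n → ℝ} {r : ι → Fin n → ℝ} {C : Set (Fin n → ℝ)} {k : ι}

theorem mem_recc_closure_convexHull_diff (hk : k ∈ N2set xb r C) {d : Fin n → ℝ}
    (hd : d ∈ recc (PBset xb r)) (hdS : d ∉ recc (SkCset xb r C k)) :
    d ∈ recc (closure (convexHull ℝ (PBset xb r \ SkCset xb r C k))) := by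
  refine mem_recc_closure_of_eventually (convex_convexHull ℝ _) (x := xb) ?_
  have hout : ∀ᶠ t : ℝ in atTop, xb + t • d ∉ SkCset xb r C k :=
    not_frequently.mp (mt (mem_recc_SkCset_of_frequently hk) hdS)
  filter_upwards [hout, eventually_ge_atTop 0] with t ht ht0
  exact subset_convexHull ℝ _ ⟨hd xb (self_mem_PBset xb) t ht0, ht⟩

theorem mem_recc_closure_convexHull_diff_of_gam'_nonpos (hk : k ∈ N2set xb r C) {i j : ι}
    (hγ : gam' xb r C k i j ≤ 0) :
    r i ∈ recc (closure (convexHull ℝ (PBset xb r \ SkCset xb r C k))) := by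
  refine (isClosed_recc isClosed_closure).mem_of_tendsto (tendsto_add_smul_nhdsGT (r i) (r j))
    (eventually_nhdsWithin_of_forall fun γ (hγ0 : 0 < γ) => ?_)
  refine mem_recc_closure_convexHull_diff hk (add_mem_recc
    (reccPBset_subset_recc_PBset xb (apply_mem_reccPBset i))
    (smul_mem_recc (reccPBset_subset_recc_PBset xb (apply_mem_reccPBset j)) hγ0.le)) fun hmem => ?_
  have : (γ : EReal) ≤ gam' xb r C k i j := le_sSup ⟨γ, ⟨hγ0.le, hmem⟩, rfl⟩
  exact hγ0.not_ge (by exact_mod_cast this.trans hγ)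

theorem self_mem_closure_convexHull_diff (hr : LinearIndependent ℝ r)
    (hrecc : recc C ⊆ reccPBset r) (hk : k ∈ N2set xb r C) {j : ι} (hjN2 : j ∉ N2set xb r C)
    (hj : r j ∉ recc (SkCset xb r C k)) :
    xb ∈ closure (convexHull ℝ (PBset xb r \ SkCset xb r C k)) := by
  have hjk : j ≠ k := fun h => hjN2 (h ▸ hk)
  refine mem_closure_of_tendsto (tendsto_add_smul_nhdsGT xb (r j))
    (eventually_nhdsWithin_of_forall fun t (ht : 0 < t) => ?_)
  exact subset_convexHull ℝ _ ⟨reccPBset_subset_recc_PBset xb (apply_mem_reccPBset j) xb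
    (self_mem_PBset xb) t ht.le, add_smul_notMem_SkCset hr hrecc hjN2 hjk hj ht⟩

end Closure

theorem stmt19_general (xb : Fin n → ℝ) (r : ι → Fin n → ℝ) (hr : LinearIndependent ℝ r)
    (C : Set (Fin n → ℝ)) (hrecc : recc C ⊆ reccPBset r)
    (k : ι) (hk : k ∈ N2set xb r C)
    (hN0 : ∃ j ∈ N0set xb r C, r j ∉ recc (SkCset xb r C k))
    (hM : M'set xb r C k = ∅) :
    closure (convexHull ℝ (PBset xb r \ SkCset xb r C k)) = PBset xb r := by
  set D := closure (convexHull ℝ (PBset xb r \ SkCset xb r C k))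
  obtain ⟨j₀, hj₀, hj₀S⟩ := hN0
  have hxbD : xb ∈ D :=
    self_mem_closure_convexHull_diff hr hrecc hk (notMem_N2set_of_mem_N0set hj₀) hj₀S
  have hrD : ∀ i, r i ∈ recc D := by
    intro i
    by_cases hiS : r i ∈ recc (SkCset xb r C k)
    · have hiM : i ∉ M'set xb r C k := hM ▸ notMem_empty i
      simp only [M'set, mem_ofPred_eq, not_and, not_forall, not_lt] at hiM
      obtain ⟨j, -, hγ⟩ := hiM hiS
      exact mem_recc_closure_convexHull_diff_of_gam'_nonpos hk hγ
    · exact mem_recc_closure_convexHull_diff hk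
        (reccPBset_subset_recc_PBset xb (apply_mem_reccPBset i)) hiS
  refine (closure_minimal (convexHull_min sdiff_subset (convex_PBset xb r))
    (isClosed_PBset xb hr)).antisymm fun x hx => ?_
  rw [PBset_eq, singleton_add] at hx
  obtain ⟨d, hd, rfl⟩ := hx
  simpa using reccPBset_subset_recc hrD hd xb hxbD 1 zero_le_one

/-- Proposition 11. If some `j ∈ N₀` has `r^j ∉ recc(S_k^C)` and
`M' = ∅`, then `cl conv(P^B ∖ S_k^C) = P^B`. -/
theorem stmt19 (xb : Fin n → ℝ) (r : ι → Fin n → ℝ) (hr : LinearIndependent ℝ r)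
    (C : Set (Fin n → ℝ)) (hCopen : IsOpen C) (hCconv : Convex ℝ C)
    (hxb : xb ∉ closure C) (hrecc : recc C ⊆ reccPBset r)
    (k : ι) (hk : k ∈ N2set xb r C)
    (hN0 : ∃ j ∈ N0set xb r C, r j ∉ recc (SkCset xb r C k))
    (hM : M'set xb r C k = ∅) :
    closure (convexHull ℝ (PBset xb r \ SkCset xb r C k)) = PBset xb r :=
  stmt19_general xb r hr C hrecc k hk hN0 hM
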